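/- Define γ₁⁵ : [0,1] → S³ ⊂ ℝ⁴ by γ₁⁵(t) = ( (1/4)cos(15πt/2) + (3/4)cos(5πt/2), (√3/4)sin(15πt/2) + (√3/4)sin(5πt/2), (√3/4)cos(5πt/2) − (√3/4)cos(15πt/2), (3/4)sin(5πt/2) − (1/4)sin(15πt/2) ). Then the second and third coordinates of γ₁⁵(i/5) vanish for i = 1, 2, 3, 4; consequently, for the nonzero vector h = (0,1,0,0) ∈ ℝ⁴, the function t ↦ h·γ₁⁵(t) vanishes at the four distinct points 1/5, 2/5, 3/5, 4/5 ∈ (0,1), so γ₁⁵ is not convex. -/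
import Mathlib


open Set Real

/-- The Euclidean dot product on `ℝ^k`. -/
def dotv {k : ℕ} (v w : Fin k → ℝ) : ℝ := ∑ i, v i * w i

/-- The curve `γ` intersects the hyperplane `{x : h·x = 0}` with total multiplicity at
most `N` on the open interval `(a,b)`: for any distinct points `t₁, …, t_j ∈ (a,b)` and
positive integers `m₁, …, m_j` such that `f = h·γ` vanishes at `t_i` together with its
first `m_i − 1` derivatives, one has `m₁ + ⋯ + m_j ≤ N`. -/
def MultAtMost {k : ℕ} (γ : ℝ → Fin k → ℝ) (a b : ℝ) (h : Fin k → ℝ) (N : ℕ) : Prop :=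
  ∀ (j : ℕ) (t : Fin j → ℝ) (m : Fin j → ℕ),
    (∀ i, t i ∈ Ioo a b) → Function.Injective t → (∀ i, 1 ≤ m i) →
    (∀ i, ∀ l < m i, iteratedDeriv l (fun s => dotv h (γ s)) (t i) = 0) →
    ∑ i, m i ≤ N

/-- The curve `γ₁⁵ : [0,1] → S³`. -/
noncomputable def gamma15 (t : ℝ) : Fin 4 → ℝ :=
  ![1 / 4 * Real.cos (15 * π * t / 2) + 3 / 4 * Real.cos (5 * π * t / 2),
    Real.sqrt 3 / 4 * Real.sin (15 * π * t / 2) + Real.sqrt 3 / 4 * Real.sin (5 * π * t / 2),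
    Real.sqrt 3 / 4 * Real.cos (5 * π * t / 2) - Real.sqrt 3 / 4 * Real.cos (15 * π * t / 2),
    3 / 4 * Real.sin (5 * π * t / 2) - 1 / 4 * Real.sin (15 * π * t / 2)]

lemma gamma15_coords (i : ℕ) (h1 : 1 ≤ i) (h2 : i ≤ 4) :
    gamma15 ((i : ℝ) / 5) 1 = 0 ∧ gamma15 ((i : ℝ) / 5) 2 = 0 := by
  interval_cases i <;> push_cast <;>
    simp only [gamma15, Matrix.cons_val_one, Matrix.head_cons, Matrix.cons_val_two,
      Matrix.tail_cons]
  · rw [show (15:ℝ) * π * ((1:ℝ) / 5) / 2 = π/2 + π by ring,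
        show (5:ℝ) * π * ((1:ℝ) / 5) / 2 = π/2 by ring, Real.sin_add_pi, Real.cos_add_pi]
    norm_num
  · rw [show (15:ℝ) * π * ((2:ℝ) / 5) / 2 = π + 2*π by ring,
        show (5:ℝ) * π * ((2:ℝ) / 5) / 2 = π by ring, Real.sin_add_two_pi, Real.cos_add_two_pi]
    norm_num
  · rw [show (15:ℝ) * π * ((3:ℝ) / 5) / 2 = π/2 + 2*π + 2*π by ring,
        show (5:ℝ) * π * ((3:ℝ) / 5) / 2 = π/2 + π by ring, Real.sin_add_two_pi,
        Real.sin_add_two_pi, Real.cos_add_two_pi, Real.cos_add_two_pi,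
        Real.sin_add_pi, Real.cos_add_pi]
    norm_num
  · rw [show (15:ℝ) * π * ((4:ℝ) / 5) / 2 = 2*π + 2*π + 2*π by ring,
        show (5:ℝ) * π * ((4:ℝ) / 5) / 2 = 2*π by ring, Real.sin_add_two_pi,
        Real.sin_add_two_pi, Real.cos_add_two_pi, Real.cos_add_two_pi]
    norm_num

lemma gamma15_dot (i : ℕ) (h1 : 1 ≤ i) (h2 : i ≤ 4) :
    dotv (![0, 1, 0, 0] : Fin 4 → ℝ) (gamma15 ((i : ℝ) / 5)) = 0 := by
  have := (gamma15_coords i h1 h2).1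
  simp [dotv, Fin.sum_univ_four, this]

/-- The second and third coordinates of `γ₁⁵(i/5)` vanish for
`i = 1, 2, 3, 4`; consequently, for `h = (0,1,0,0)`, the function `t ↦ h·γ₁⁵(t)`
vanishes at the four distinct interior points `1/5, 2/5, 3/5, 4/5`, so `γ₁⁵` is not
convex. -/
theorem stmt_17 :
    (∀ i : ℕ, 1 ≤ i → i ≤ 4 → gamma15 ((i : ℝ) / 5) 1 = 0 ∧ gamma15 ((i : ℝ) / 5) 2 = 0) ∧
    (∀ i : ℕ, 1 ≤ i → i ≤ 4 →
      dotv (![0, 1, 0, 0] : Fin 4 → ℝ) (gamma15 ((i : ℝ) / 5)) = 0) ∧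
    ¬ MultAtMost gamma15 0 1 ![0, 1, 0, 0] 3 ∧
    ¬ (∀ h : Fin 4 → ℝ, h ≠ 0 → MultAtMost gamma15 0 1 h 3) := by
  have hnot : ¬ MultAtMost gamma15 0 1 ![0, 1, 0, 0] 3 := by
    intro hM
    have hd : ∀ n : ℕ, 1 ≤ n → n ≤ 4 →
        dotv (![0, 1, 0, 0] : Fin 4 → ℝ) (gamma15 ((n : ℝ) / 5)) = 0 := gamma15_dot
    have := hM 4 ![1/5, 2/5, 3/5, 4/5] (fun _ => 1)
      (by intro i; fin_cases i <;> constructor <;> norm_num)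
      (by
        intro a b hab
        fin_cases a <;> fin_cases b <;> simp_all <;> norm_num at hab)
      (fun _ => le_refl 1)
      (by
        intro i l hl
        interval_cases l
        rw [iteratedDeriv_zero]
        fin_cases i
        · have := hd 1 (by norm_num) (by norm_num); norm_num at this ⊢; exact this
        · have := hd 2 (by norm_num) (by norm_num); norm_num at this ⊢; exact this
        · have := hd 3 (by norm_num) (by norm_num); norm_num at this ⊢; exact this
        · have := hd 4 (by norm_num) (by norm_num); norm_num at this ⊢; exact this)
    simp [Fin.sum_univ_four] at this
  refine ⟨gamma15_coords, gamma15_dot, hnot, ?_⟩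
  intro hall
  exact hnot (hall ![0, 1, 0, 0] (by
    intro h0
    have := congrFun h0 1
    simp at this))
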